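/- Let m be a positive natural number and s : Fin m → ℝ with s i ≥ Real.exp 2 for all i. Define, for a weight function w : Fin m → ℝ, N_S(w) as the minimum cardinality of a subset K ⊆ Fin m such that ∑_{i ∈ K} w i ≥ (2/3) · ∑_i w i. Then N_S(fun i => Real.log (s i)) ≥ N_S(fun i => Real.sqrt (s i)); that is, the Nakamoto coefficient for safety under the Logarithmic Stake Weight model is at least that under the Square Root Stake Weight model. -/

import Mathlib

/-!
Take a smallest quorum `K` for the logarithmic weights and replace it by a set `T` of the same
size with maximal total log weight; `T` is still a quorum, and by an exchange argument it consists
of the largest stakes. Since `log x / √x` is antitone on `[e², ∞)`, the ratio of log weight to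
square-root weight is smaller on `T` than off `T`, so the share of `T` in the total square-root
weight is at least its share in the total log weight: `T` is also a quorum for the square-root
weights.
-/

open Finset

/-- The Nakamoto coefficient for safety of a weight function `w` on `m` validators:
the minimum cardinality of a subset of validators whose cumulative weight is at least
two-thirds of the total weight. -/
noncomputable def nakamotoSafety (m : ℕ) (w : Fin m → ℝ) : ℕ :=
  sInf {n : ℕ | ∃ K : Finset (Fin m), K.card = n ∧ (2 / 3 : ℝ) * ∑ i, w i ≤ ∑ i ∈ K, w i}

theorem Real.log_mul_sqrt_le_sqrt_mul_log {x y : ℝ} (hy : Real.exp 2 ≤ y) (hyx : y ≤ x) :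
    Real.log x * √y ≤ √x * Real.log y := by
  have hy_pos : 0 < √y := Real.sqrt_pos.2 ((Real.exp_pos 2).trans_le hy)
  have hx_pos : 0 < √x := Real.sqrt_pos.2 ((Real.exp_pos 2).trans_le (hy.trans hyx))
  have h := Real.log_div_sqrt_antitoneOn (Set.mem_Ici.2 hy) (Set.mem_Ici.2 (hy.trans hyx)) hyx
  rwa [div_le_div_iff₀ hx_pos hy_pos, mul_comm (Real.log y)] at h

namespace Finset

variable {ι : Type*} [DecidableEq ι]

theorem le_of_forall_sum_le_of_mem_of_notMem {f : ι → ℝ} {T : Finset ι}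
    (hT : ∀ K : Finset ι, K.card = T.card → ∑ i ∈ K, f i ≤ ∑ i ∈ T, f i)
    {i j : ι} (hi : i ∈ T) (hj : j ∉ T) : f j ≤ f i := by
  have hcard : (insert j (T.erase i)).card = T.card := by
    rw [card_insert_of_notMem fun h => hj (mem_of_mem_erase h), card_erase_add_one hi]
  have hsum := hT _ hcard
  rw [sum_insert fun h => hj (mem_of_mem_erase h), ← add_sum_erase T f hi] at hsum
  linarith

theorem exists_card_eq_sum_le_forall_le [Fintype ι] (f : ι → ℝ) (K : Finset ι) :
    ∃ T : Finset ι, T.card = K.card ∧ ∑ i ∈ K, f i ≤ ∑ i ∈ T, f i ∧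
      ∀ i ∈ T, ∀ j ∉ T, f j ≤ f i := by
  obtain ⟨T, hT, hT_max⟩ := (powersetCard K.card (univ : Finset ι)).exists_max_image
    (fun T => ∑ i ∈ T, f i) ⟨K, mem_powersetCard_univ.2 rfl⟩
  have hT_card : T.card = K.card := mem_powersetCard_univ.1 hT
  have hT_max' : ∀ L : Finset ι, L.card = T.card → ∑ i ∈ L, f i ≤ ∑ i ∈ T, f i :=
    fun L hL => hT_max L (mem_powersetCard_univ.2 (hL.trans hT_card))
  exact ⟨T, hT_card, hT_max' K hT_card.symm,
    fun i hi j hj => le_of_forall_sum_le_of_mem_of_notMem hT_max' hi hj⟩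

theorem sum_mul_sum_le_sum_mul_sum_of_forall_mem_notMem [Fintype ι] {f g : ι → ℝ}
    {T : Finset ι} (h : ∀ i ∈ T, ∀ j ∉ T, f i * g j ≤ g i * f j) :
    (∑ i ∈ T, f i) * ∑ i, g i ≤ (∑ i ∈ T, g i) * ∑ i, f i := by
  have hcross : (∑ i ∈ T, f i) * ∑ j ∈ Tᶜ, g j ≤ (∑ i ∈ T, g i) * ∑ j ∈ Tᶜ, f j := by
    rw [sum_mul_sum, sum_mul_sum]
    exact sum_le_sum fun i hi => sum_le_sum fun j hj => h i hi j (mem_compl.1 hj)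
  rw [← sum_add_sum_compl T g, ← sum_add_sum_compl T f]
  linarith

end Finset

theorem mul_sum_le_sum_of_sum_mul_sum_le {ι : Type*} [Fintype ι] {f g : ι → ℝ} {T : Finset ι} {c : ℝ}
    (hf : 0 < ∑ i, f i) (hg : 0 ≤ ∑ i, g i)
    (hfg : (∑ i ∈ T, f i) * ∑ i, g i ≤ (∑ i ∈ T, g i) * ∑ i, f i)
    (hT : c * ∑ i, f i ≤ ∑ i ∈ T, f i) : c * ∑ i, g i ≤ ∑ i ∈ T, g i := by
  refine le_of_mul_le_mul_right ?_ hf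
  calc c * (∑ i, g i) * ∑ i, f i = (c * ∑ i, f i) * ∑ i, g i := by ring
    _ ≤ (∑ i ∈ T, f i) * ∑ i, g i := mul_le_mul_of_nonneg_right hT hg
    _ ≤ (∑ i ∈ T, g i) * ∑ i, f i := hfg

theorem nakamotoSafety_le_card {m : ℕ} {w : Fin m → ℝ} {K : Finset (Fin m)}
    (hK : (2 / 3 : ℝ) * ∑ i, w i ≤ ∑ i ∈ K, w i) : nakamotoSafety m w ≤ K.card :=
  Nat.sInf_le ⟨K, rfl, hK⟩

theorem exists_card_eq_nakamotoSafety {m : ℕ} {w : Fin m → ℝ} (hw : 0 ≤ ∑ i, w i) :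
    ∃ K : Finset (Fin m), K.card = nakamotoSafety m w ∧
      (2 / 3 : ℝ) * ∑ i, w i ≤ ∑ i ∈ K, w i :=
  Nat.sInf_mem (s := {n | ∃ K : Finset (Fin m), K.card = n ∧
    (2 / 3 : ℝ) * ∑ i, w i ≤ ∑ i ∈ K, w i}) ⟨_, univ, rfl, by linarith⟩

/-- Theorem 2 (safety part): for stakes at least `e²`, the Nakamoto coefficient for
safety under the Logarithmic Stake Weight model is at least that under the
Square Root Stake Weight model. -/
theorem lsw_nakamoto_safety_ge_srsw (m : ℕ) (hm : 0 < m) (s : Fin m → ℝ)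
    (hs : ∀ i, Real.exp 2 ≤ s i) :
    nakamotoSafety m (fun i => Real.sqrt (s i)) ≤
      nakamotoSafety m (fun i => Real.log (s i)) := by
  have hs_pos : ∀ i, 0 < s i := fun i => (Real.exp_pos 2).trans_le (hs i)
  have hlog_pos : ∀ i, 0 < Real.log (s i) := fun i =>
    Real.log_pos ((Real.one_lt_exp_iff.2 two_pos).trans_le (hs i))
  have hlog_sum_pos : 0 < ∑ i, Real.log (s i) :=
    sum_pos (fun i _ => hlog_pos i) (univ_nonempty_iff.2 ⟨⟨0, hm⟩⟩)
  obtain ⟨K, hK_card, hK⟩ := exists_card_eq_nakamotoSafety hlog_sum_pos.le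
  obtain ⟨T, hT_card, hKT, hT_top⟩ := exists_card_eq_sum_le_forall_le (fun i => Real.log (s i)) K
  rw [← hK_card, ← hT_card]
  refine nakamotoSafety_le_card (mul_sum_le_sum_of_sum_mul_sum_le hlog_sum_pos
    (sum_nonneg fun i _ => Real.sqrt_nonneg _) ?_ (hK.trans hKT))
  refine sum_mul_sum_le_sum_mul_sum_of_forall_mem_notMem fun i hi j hj => ?_
  exact Real.log_mul_sqrt_le_sqrt_mul_log (hs j)
    ((Real.log_le_log_iff (hs_pos j) (hs_pos i)).1 (hT_top i hi j hj))
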